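/- arXiv:1910.01072 — 2 statements merged into one kernel-verified Lean document; each statement's English description precedes it below -/
import Mathlib

section
/- The chromatic number of the Cartesian product of two simple graphs G and H equals the maximum of the chromatic numbers of G and H. -/
/-! Adjacent vertices of `G □ H` differ in exactly one coordinate, so adding the colors of the two
coordinates in a cancellative monoid such as `Fin n` colors `G □ H` properly. Conversely `G` and
`H` embed into `G □ H` as fibres. -/

namespace SimpleGraph

variable {α β γ : Type*} {G : SimpleGraph α} {H : SimpleGraph β}

def Coloring.boxProd [Add γ] [IsCancelAdd γ] (f : G.Coloring γ) (g : H.Coloring γ) :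
    (G □ H).Coloring γ :=
  Coloring.mk (fun x => f x.1 + g x.2) <| by
    rintro ⟨a, b⟩ ⟨a', b'⟩ (⟨ha, rfl⟩ | ⟨hb, rfl⟩)
    · exact fun h => f.valid ha (add_right_cancel h)
    · exact fun h => g.valid hb (add_left_cancel h)

theorem Colorable.boxProd {n : ℕ} (hG : G.Colorable n) (hH : H.Colorable n) :
    (G □ H).Colorable n := by
  cases n with
  | zero =>
    have := colorable_zero_iff.mp hG
    exact .of_isEmpty 0
  | succ n => exact ⟨hG.some.boxProd hH.some⟩

theorem chromaticNumber_boxProd_le :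
    (G □ H).chromaticNumber ≤ max G.chromaticNumber H.chromaticNumber := by
  induction hm : max G.chromaticNumber H.chromaticNumber using ENat.recTopCoe with
  | top => exact le_top
  | coe n =>
    obtain ⟨hG, hH⟩ := max_le_iff.mp hm.le
    exact ((chromaticNumber_le_iff_colorable.mp hG).boxProd
      (chromaticNumber_le_iff_colorable.mp hH)).chromaticNumber_le

end SimpleGraph

open SimpleGraph

theorem chromaticNumber_boxProd_general {α β : Type*}
    [Nonempty α] [Nonempty β] (G : SimpleGraph α) (H : SimpleGraph β) :
    (G □ H).chromaticNumber = max G.chromaticNumber H.chromaticNumber :=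
  chromaticNumber_boxProd_le.antisymm <| max_le
    (chromaticNumber_mono_of_hom (G.boxProdLeft H (Classical.arbitrary β)).toHom)
    (chromaticNumber_mono_of_hom (G.boxProdRight H (Classical.arbitrary α)).toHom)

/-- The chromatic number of the Cartesian (box) product of two finite simple graphs
equals the maximum of their chromatic numbers. -/
theorem chromaticNumber_boxProd {α β : Type*} [Fintype α] [Fintype β]
    [Nonempty α] [Nonempty β] (G : SimpleGraph α) (H : SimpleGraph β) :
    (G □ H).chromaticNumber = max G.chromaticNumber H.chromaticNumber :=
  chromaticNumber_boxProd_general G H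
end

section
/- For a ≥ 1 and χ ≥ 2, the Turán graph T_{aχ,χ} is an a(χ−1)-regular graph with chromatic number χ, and every a(χ−1)-regular graph with chromatic number χ has at least aχ vertices; hence T_{aχ,χ} is an extremal (a(χ−1)|χ)-graph. -/
/-!
Residues mod `χ` split `T_{aχ,χ}` into `χ` classes of size `a`, so every vertex has degree
`aχ - a`, the residue is a proper `χ`-colouring, and `0, …, χ - 1` form a clique.
Conversely, in a `d`-regular graph a colour class is disjoint from the neighbourhood of each of
its vertices, so it has at most `n - d` vertices; a `χ`-colouring thus gives `n ≤ χ (n - d)`,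
i.e. `χ d ≤ (χ - 1) n`, which for `d = a (χ - 1)` is `a χ ≤ n`.
-/

open Finset

namespace SimpleGraph

lemma card_filter_modNat_eq (a : ℕ) {χ : ℕ} (k : Fin χ) :
    #{w : Fin (a * χ) | w.modNat = k} = a := by
  rw [card_equiv finProdFinEquiv.symm (t := univ ×ˢ {k}) (by simp [eq_comm])]
  simp

lemma turanGraph_mul_adj_iff {a χ : ℕ} {v w : Fin (a * χ)} :
    (turanGraph (a * χ) χ).Adj v w ↔ v.modNat ≠ w.modNat := by
  simp [turanGraph_adj, Fin.ext_iff]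

theorem turanGraph_mul_isRegularOfDegree (a χ : ℕ) :
    (turanGraph (a * χ) χ).IsRegularOfDegree (a * (χ - 1)) := by
  intro v
  have hN : (turanGraph (a * χ) χ).neighborFinset v =
      ({w | ¬w.modNat = v.modNat} : Finset (Fin (a * χ))) := by
    ext w
    simp [turanGraph_mul_adj_iff, ne_comm]
  have hsplit :=
    card_filter_add_card_filter_not (s := univ) (fun w : Fin (a * χ) => w.modNat = v.modNat)
  rw [card_filter_modNat_eq, card_univ, Fintype.card_fin] at hsplit
  rw [degree, hN, Nat.mul_sub_one]
  omega

theorem turanGraph_colorable (n : ℕ) {r : ℕ} (hr : 0 < r) : (turanGraph n r).Colorable r :=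
  ⟨Coloring.mk (fun v => ⟨v % r, Nat.mod_lt _ hr⟩) fun hvw h => hvw (Fin.mk.inj h)⟩

theorem turanGraph_isClique_filter_val_lt (n r : ℕ) :
    (turanGraph n r).IsClique ({v : Fin n | v < r} : Finset (Fin n)) := by
  intro v hv w hw hvw
  simp only [coe_filter, mem_univ, true_and, Set.mem_ofPred_eq] at hv hw
  simpa [turanGraph_adj, Nat.mod_eq_of_lt hv, Nat.mod_eq_of_lt hw, Fin.val_inj] using hvw

theorem chromaticNumber_turanGraph {n r : ℕ} (hr : 0 < r) (hrn : r ≤ n) :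
    (turanGraph n r).chromaticNumber = r := by
  refine (turanGraph_colorable n hr).chromaticNumber_le.antisymm ?_
  simpa [Fin.card_filter_val_lt, hrn] using
    (turanGraph_isClique_filter_val_lt n r).card_le_chromaticNumber

section Regular

variable {V : Type*} [Fintype V] {G : SimpleGraph V} [DecidableRel G.Adj]

lemma ncard_neighborSet_eq_degree (v : V) : (G.neighborSet v).ncard = G.degree v := by
  rw [Set.ncard_eq_toFinset_card', ← neighborFinset_def, card_neighborFinset_eq_degree]

lemma card_fiber_coloring_add_degree_le {α : Type*} [DecidableEq α] (C : G.Coloring α) (v : V) :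
    #{w | C w = C v} + G.degree v ≤ Fintype.card V := by
  classical
  rw [← card_neighborFinset_eq_degree, ← card_union_of_disjoint]
  · exact card_le_univ _
  · refine Finset.disjoint_left.mpr fun w hw hadj => ?_
    rw [mem_filter] at hw
    exact C.valid (G.adj_symm ((G.mem_neighborFinset v w).mp hadj)) hw.2

theorem card_le_mul_card_sub_of_isRegularOfDegree {d k : ℕ} (hreg : G.IsRegularOfDegree d)
    (hcol : G.Colorable k) : Fintype.card V ≤ k * (Fintype.card V - d) := by
  obtain ⟨C⟩ := hcol
  have hfiber (c : Fin k) : #{v | C v = c} ≤ Fintype.card V - d := by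
    obtain ⟨v, hv⟩ | hempty := (filter (fun v => C v = c) univ).eq_empty_or_nonempty.symm
    · rw [(mem_filter.mp hv).2.symm]
      have hv_bound := card_fiber_coloring_add_degree_le C v
      rw [hreg v] at hv_bound
      omega
    · simp [hempty]
  calc Fintype.card V = ∑ c : Fin k, #{v | C v = c} := card_eq_sum_card_fiberwise (by simp)
    _ ≤ ∑ _c : Fin k, (Fintype.card V - d) := sum_le_sum fun c _ => hfiber c
    _ = k * (Fintype.card V - d) := by simp

theorem mul_degree_le_of_isRegularOfDegree [Nonempty V] {d k : ℕ} (hreg : G.IsRegularOfDegree d)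
    (hcol : G.Colorable k) : k * d ≤ (k - 1) * Fintype.card V := by
  have hd : d ≤ Fintype.card V := hreg (Classical.arbitrary V) ▸ (G.degree_lt_card_verts _).le
  have hcard := card_le_mul_card_sub_of_isRegularOfDegree hreg hcol
  rcases k with _ | k
  · simp
  · zify [hd] at hcard ⊢
    push_cast
    linarith

end Regular

end SimpleGraph

open SimpleGraph

/-- For `a ≥ 1` and `χ ≥ 2`, the Turán graph `T_{aχ,χ}` is an `a(χ−1)`-regular graph
with chromatic number `χ`, and every `a(χ−1)`-regular graph with chromatic number `χ`
has at least `aχ` vertices; hence `T_{aχ,χ}` is an extremal `(a(χ−1)|χ)`-graph. -/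
theorem turanGraph_extremal (a χ : ℕ) (ha : 1 ≤ a) (hχ : 2 ≤ χ) :
    (SimpleGraph.turanGraph (a * χ) χ).IsRegularOfDegree (a * (χ - 1)) ∧
    (SimpleGraph.turanGraph (a * χ) χ).chromaticNumber = χ ∧
    ∀ (n : ℕ) (G : SimpleGraph (Fin n)),
      (∀ v, (G.neighborSet v).ncard = a * (χ - 1)) → G.chromaticNumber = χ →
        a * χ ≤ n := by
  refine ⟨turanGraph_mul_isRegularOfDegree a χ,
    chromaticNumber_turanGraph (by omega) (Nat.le_mul_of_pos_left χ ha), ?_⟩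
  intro n G hdeg hχG
  classical
  have hreg : G.IsRegularOfDegree (a * (χ - 1)) := fun v =>
    ncard_neighborSet_eq_degree (G := G) v ▸ hdeg v
  have : Nonempty (Fin n) := not_isEmpty_iff.mp fun h => by
    rw [chromaticNumber_eq_zero_iff.mpr h] at hχG
    norm_cast at hχG
    omega
  have hcol : G.Colorable χ := chromaticNumber_le_iff_colorable.mp hχG.le
  have key := mul_degree_le_of_isRegularOfDegree hreg hcol
  rw [Fintype.card_fin] at key
  refine Nat.le_of_mul_le_mul_left (c := χ - 1) ?_ (by omega)
  calc (χ - 1) * (a * χ) = χ * (a * (χ - 1)) := by ring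
    _ ≤ (χ - 1) * n := key
end
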